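/- arXiv:2112.06664 — 3 statements merged into one kernel-verified Lean document; each statement's English description precedes it below -/
import Mathlib

section
/- For every τ > 0, every n ∈ ℕ, every φ ∈ Φ, and every bounded nondecreasing right-continuous function v : [0,τ] → ℝ, one has I_{n,φ}(τ,v) · E_n(A) ≤ ∫_{[0,τ]} ω_φ(A, u/λ_n) dv(u), where I_{n,φ}(τ,v) := inf_{k ∈ ℕ, k ≥ n} ∫_{[0,τ]} φ(λ_k t / λ_n) dv(t) and the integrals are taken with respect to the Lebesgue–Stieltjes measure of v. -/
/-! Fix `γ ∈ Γ`. Every tail index `|k| ≥ n` has weight `∫ φ(λ_k t/λ_n) dv(t) ≥ I_{n,φ}(τ,v)`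
(for `k < 0` because `λ` is odd and `φ` even), so by monotone convergence
`I · Σ_{|k|≥n} γ_k |A_k| ≤ ∫ Σ_{|k|≥n} γ_k φ(λ_k u/λ_n) |A_k| dv(u)`, and for `u ≥ 0` the integrand
is one of the sums in the supremum defining `ω_φ(A, u/λ_n)`, taken at `h = u/λ_n`. -/

open MeasureTheory Real Filter Finset intervalIntegral
open scoped ENNReal Topology

noncomputable section

/-- `M` is an Orlicz function: nondecreasing and convex on `[0,∞)`, `M 0 = 0`,
and `M t → ∞` as `t → ∞`. -/
def IsOrlicz (M : ℝ → ℝ) : Prop :=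
  MonotoneOn M (Set.Ici 0) ∧ ConvexOn ℝ (Set.Ici 0) M ∧ M 0 = 0 ∧
    Filter.Tendsto M Filter.atTop Filter.atTop

/-- The Legendre conjugate `M*(v) = sup {uv - M u : u ≥ 0}`, valued in `[0,∞]`. -/
def Mstar (M : ℝ → ℝ) (v : ℝ) : ℝ≥0∞ :=
  ⨆ (u : ℝ) (_ : 0 ≤ u), ENNReal.ofReal (u * v - M u)

/-- The set `Γ` of positive sequences `γ` with `Σ_k M_k^*(γ_k) ≤ 1`. -/
def GammaSet (M : ℤ → ℝ → ℝ) : Set (ℤ → ℝ) :=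
  {γ | (∀ k, 0 < γ k) ∧ ∑' k : ℤ, Mstar (M k) (γ k) ≤ 1}

/-- The Orlicz norm `‖A‖_M = sup_{γ ∈ Γ} Σ_k γ_k |A_k|` of a sequence of
Fourier coefficients, valued in `[0,∞]`. -/
def orliczNorm (M : ℤ → ℝ → ℝ) (A : ℤ → ℂ) : ℝ≥0∞ :=
  ⨆ γ ∈ GammaSet M, ∑' k : ℤ, ENNReal.ofReal (γ k * ‖A k‖)

/-- The best approximation `E_n(A) = sup_{γ ∈ Γ} Σ_{|k| ≥ n} γ_k |A_k|`. -/
def bestE (M : ℤ → ℝ → ℝ) (A : ℤ → ℂ) (n : ℕ) : ℝ≥0∞ :=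
  ⨆ γ ∈ GammaSet M, ∑' k : ℤ,
    if (n : ℤ) ≤ |k| then ENNReal.ofReal (γ k * ‖A k‖) else 0

/-- The generalized modulus of smoothness
`ω_φ(A, δ) = sup_{|h| ≤ δ} sup_{γ ∈ Γ} Σ_k γ_k φ(λ_k h) |A_k|`. -/
def genMod (Λ : ℤ → ℝ) (M : ℤ → ℝ → ℝ) (A : ℤ → ℂ) (φ : ℝ → ℝ) (δ : ℝ) : ℝ≥0∞ :=
  ⨆ (h : ℝ) (_ : |h| ≤ δ), ⨆ γ ∈ GammaSet M, ∑' k : ℤ,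
    ENNReal.ofReal (γ k * φ (Λ k * h) * ‖A k‖)

/-- The class `Φ`: continuous bounded nonnegative even functions vanishing at `0`
whose zero set has Lebesgue measure zero. -/
def IsPhi (φ : ℝ → ℝ) : Prop :=
  Continuous φ ∧ (∃ C, ∀ t, φ t ≤ C) ∧ (∀ t, 0 ≤ φ t) ∧ φ 0 = 0 ∧
    (∀ t, φ (-t) = φ t) ∧ MeasureTheory.volume {t : ℝ | φ t = 0} = 0

/-- A symmetric sequence of Fourier exponents: `λ_0 = 0`, `λ_{-k} = -λ_k`,
and `0 < λ_k < λ_{k+1}` for `k ≥ 1`. -/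
def IsExponents (Λ : ℤ → ℝ) : Prop :=
  Λ 0 = 0 ∧ (∀ k, Λ (-k) = -Λ k) ∧ (∀ k : ℤ, 1 ≤ k → 0 < Λ k) ∧
    (∀ k : ℤ, 1 ≤ k → Λ k < Λ (k + 1))

/-- `φ_α(t) = 2^{α/2} (1 - cos t)^{α/2}`, so that `ω_{φ_α} = ω_α`. -/
def phiAlpha (α : ℝ) (t : ℝ) : ℝ := 2 ^ (α / 2) * (1 - Real.cos t) ^ (α / 2)

/-- `sinc t = sin t / t` for `t ≠ 0`, `sinc 0 = 1`. -/
def sincFn (t : ℝ) : ℝ := if t = 0 then 1 else Real.sin t / t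

/-- `φ̃_m(t) = (1 - sinc t)^m`, so that `ω_{φ̃_m} = ω̃_m`. -/
def phiTilde (m : ℕ) (t : ℝ) : ℝ := (1 - sincFn t) ^ m

theorem mul_tsum_le_lintegral_tsum_mul {α ι : Type*} [Countable ι] [MeasurableSpace α]
    {μ : Measure α} {f : ι → α → ℝ≥0∞} (hf : ∀ i, AEMeasurable (f i) μ) {c : ι → ℝ≥0∞}
    {I : ℝ≥0∞} (hI : ∀ i, c i ≠ 0 → I ≤ ∫⁻ x, f i x ∂μ) :
    I * ∑' i, c i ≤ ∫⁻ x, ∑' i, f i x * c i ∂μ :=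
  calc I * ∑' i, c i = ∑' i, I * c i := ENNReal.tsum_mul_left.symm
    _ ≤ ∑' i, (∫⁻ x, f i x ∂μ) * c i := ENNReal.tsum_le_tsum fun i => by
        rcases eq_or_ne (c i) 0 with hc | hc
        · simp [hc]
        · exact mul_le_mul_left (hI i hc) _
    _ = ∑' i, ∫⁻ x, f i x * c i ∂μ :=
        tsum_congr fun i => (lintegral_mul_const'' _ (hf i)).symm
    _ = ∫⁻ x, ∑' i, f i x * c i ∂μ := (lintegral_tsum fun i => (hf i).mul_const _).symm

theorem IsExponents.nonneg_natCast {Λ : ℤ → ℝ} (hΛ : IsExponents Λ) (n : ℕ) : 0 ≤ Λ n := by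
  rcases n with _ | n
  · simp [hΛ.1]
  · exact (hΛ.2.2.1 _ (by omega)).le

theorem apply_natAbs_eq_or_eq_neg {Λ : ℤ → ℝ} (hΛ : ∀ k, Λ (-k) = -Λ k) (k : ℤ) :
    Λ k.natAbs = Λ k ∨ Λ k.natAbs = -Λ k := by
  rcases Int.natAbs_eq k with hk | hk
  · exact .inl (congrArg Λ hk.symm)
  · exact .inr (by rw [show (k.natAbs : ℤ) = -k by omega, hΛ])

theorem tsum_le_genMod {Λ : ℤ → ℝ} {M : ℤ → ℝ → ℝ} {A : ℤ → ℂ} {φ : ℝ → ℝ} {γ : ℤ → ℝ}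
    (hγ : γ ∈ GammaSet M) {h δ : ℝ} (hh : |h| ≤ δ) :
    ∑' k, ENNReal.ofReal (γ k * φ (Λ k * h) * ‖A k‖) ≤ genMod Λ M A φ δ :=
  le_iSup₂_of_le h hh (le_iSup₂_of_le γ hγ le_rfl)

theorem tsum_tail_le_genMod {Λ : ℤ → ℝ} {M : ℤ → ℝ → ℝ} {A : ℤ → ℂ} {φ : ℝ → ℝ}
    (hφ : ∀ t, 0 ≤ φ t) {γ : ℤ → ℝ} (hγ : γ ∈ GammaSet M) (n : ℕ) {h : ℝ} (hh : 0 ≤ h) :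
    ∑' k : ℤ, ENNReal.ofReal (φ (Λ k * h)) *
        (if (n : ℤ) ≤ |k| then ENNReal.ofReal (γ k * ‖A k‖) else 0)
      ≤ genMod Λ M A φ h := by
  refine le_trans (ENNReal.tsum_le_tsum fun k => ?_) (tsum_le_genMod hγ (abs_of_nonneg hh).le)
  split_ifs
  · rw [← ENNReal.ofReal_mul (hφ _), ← mul_assoc, mul_comm (φ _)]
  · simp

theorem direct_theorem_integral_form_general
    (Λ : ℤ → ℝ) (M : ℤ → ℝ → ℝ) (A : ℤ → ℂ)
    (hΛ : IsExponents Λ)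
    (τ : ℝ) (n : ℕ) (φ : ℝ → ℝ) (hφ : IsPhi φ)
    (v : StieltjesFunction ℝ) :
    (⨅ (k : ℕ) (_ : n ≤ k),
        ∫⁻ t in Set.Icc (0 : ℝ) τ, ENNReal.ofReal (φ (Λ k * t / Λ n)) ∂v.measure)
        * bestE M A n
      ≤ ∫⁻ u in Set.Icc (0 : ℝ) τ, genMod Λ M A φ (u / Λ n) ∂v.measure := by
  obtain ⟨hφc, -, hφ0, -, hφeven, -⟩ := hφ
  simp only [bestE, ENNReal.mul_iSup]
  refine iSup₂_le fun γ hγ => ?_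
  calc _ ≤ ∫⁻ u in Set.Icc 0 τ, ∑' k : ℤ, ENNReal.ofReal (φ (Λ k * (u / Λ n))) *
        (if (n : ℤ) ≤ |k| then ENNReal.ofReal (γ k * ‖A k‖) else 0) ∂v.measure := by
        refine mul_tsum_le_lintegral_tsum_mul
          (f := fun k u => ENNReal.ofReal (φ (Λ k * (u / Λ n))))
          (fun k => (hφc.comp (by fun_prop)).measurable.ennreal_ofReal.aemeasurable)
          fun k hk => ?_
        have hnk : n ≤ k.natAbs := by
          contrapose! hk
          exact if_neg (by rw [Int.abs_eq_natAbs]; omega)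
        refine (iInf₂_le k.natAbs hnk).trans_eq (setLIntegral_congr_fun measurableSet_Icc
          fun t _ => ?_)
        rcases apply_natAbs_eq_or_eq_neg hΛ.2.1 k with h | h
        · rw [h, mul_div_assoc]
        · rw [h, neg_mul, neg_div, hφeven, mul_div_assoc]
    _ ≤ _ := setLIntegral_mono' measurableSet_Icc fun u hu =>
        tsum_tail_le_genMod hφ0 hγ n (div_nonneg hu.1 (hΛ.nonneg_natCast n))

/-- For every `τ > 0`, `n ∈ ℕ`, `φ ∈ Φ` and every bounded nondecreasing
right-continuous `v`, one has `I_{n,φ}(τ,v) · E_n(A) ≤ ∫_{[0,τ]} ω_φ(A, u/λ_n) dv(u)`. -/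
theorem direct_theorem_integral_form
    (Λ : ℤ → ℝ) (M : ℤ → ℝ → ℝ) (A : ℤ → ℂ)
    (hΛ : IsExponents Λ) (hM : ∀ k, IsOrlicz (M k)) (hA : orliczNorm M A ≠ ⊤)
    (τ : ℝ) (hτ : 0 < τ) (n : ℕ) (hn : 1 ≤ n) (φ : ℝ → ℝ) (hφ : IsPhi φ)
    (v : StieltjesFunction ℝ) :
    (⨅ (k : ℕ) (_ : n ≤ k),
        ∫⁻ t in Set.Icc (0 : ℝ) τ, ENNReal.ofReal (φ (Λ k * t / Λ n)) ∂v.measure)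
        * bestE M A n
      ≤ ∫⁻ u in Set.Icc (0 : ℝ) τ, genMod Λ M A φ (u / Λ n) ∂v.measure :=
  direct_theorem_integral_form_general Λ M A hΛ τ n φ hφ v

end
end

section
/- Fix n ∈ ℕ and suppose A_k = 0 for every k ∈ ℤ with k ∉ {−n, 0, n}. Then for every α ≥ 1 and every τ with 0 < τ ≤ 3π/4 the exact equality holds: E_n(A) = (1/(2^α ∫_0^τ sin^α(t/2) dt)) · ∫_0^τ ω_α(A, t/λ_n) dt. -/
open MeasureTheory Real Filter Finset intervalIntegral
open scoped ENNReal Topology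

noncomputable section

/-! For `A` supported on `{-n, 0, n}` the modulus factors as
`ω_φ(A, δ) = (sup_{|h| ≤ δ} φ(λ_n h)) · E_n(A)`, the `k = 0` term being killed by `φ 0 = 0`.
For `φ = φ_α` one has `φ_α(u) = 2^α |sin(u/2)|^α`, and since `sin(·/2)` increases on `[0, π]`,
the supremum at `δ = t/λ_n` is `2^α sin^α(t/2)`. Integrating over `[0, τ]` then gives the
equality, the normalising integral being positive. -/

lemma phiAlpha_nonneg (α t : ℝ) : 0 ≤ phiAlpha α t :=
  mul_nonneg (rpow_nonneg zero_le_two _) (rpow_nonneg (sub_nonneg.2 (cos_le_one t)) _)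

lemma phiAlpha_neg (α t : ℝ) : phiAlpha α (-t) = phiAlpha α t := by
  simp [phiAlpha, cos_neg]

lemma phiAlpha_zero {α : ℝ} (hα : α ≠ 0) : phiAlpha α 0 = 0 := by
  simp [phiAlpha, zero_rpow (div_ne_zero hα two_ne_zero)]

lemma phiAlpha_eq_two_rpow_mul_abs_sin_half (α u : ℝ) :
    phiAlpha α u = 2 ^ α * |sin (u / 2)| ^ α := by
  have hcos : 1 - cos u = 2 * |sin (u / 2)| ^ 2 := by
    rw [abs_sin_half, sq_sqrt (by linarith [cos_le_one u])]
    ring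
  have hsq : (|sin (u / 2)| ^ 2 : ℝ) ^ (α / 2) = |sin (u / 2)| ^ α := by
    rw [← rpow_natCast, ← rpow_mul (abs_nonneg _)]
    congr 1
    push_cast
    ring
  have htwo : (2 : ℝ) ^ (α / 2) * 2 ^ (α / 2) = 2 ^ α := by
    rw [← rpow_add two_pos, add_halves]
  rw [phiAlpha, hcos, mul_rpow zero_le_two (by positivity), hsq, ← mul_assoc, htwo]

lemma abs_sin_half_le_sin_half {t u : ℝ} (ht : t ≤ π) (hu : |u| ≤ t) :
    |sin (u / 2)| ≤ sin (t / 2) := by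
  obtain ⟨hu₁, hu₂⟩ := abs_le.mp hu
  refine abs_le.mpr ⟨?_, ?_⟩
  · rw [← sin_neg]
    exact sin_le_sin_of_le_of_le_pi_div_two (by linarith) (by linarith) (by linarith)
  · exact sin_le_sin_of_le_of_le_pi_div_two (by linarith) (by linarith) (by linarith)

lemma iSup_ofReal_phiAlpha_mul {α c t : ℝ} (hα : 0 ≤ α) (hc : 0 < c) (ht₀ : 0 ≤ t)
    (ht : t ≤ π) :
    ⨆ (h : ℝ) (_ : |h| ≤ t / c), ENNReal.ofReal (phiAlpha α (c * h))
      = ENNReal.ofReal (2 ^ α * sin (t / 2) ^ α) := by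
  have hsin : 0 ≤ sin (t / 2) := sin_nonneg_of_nonneg_of_le_pi (by linarith) (by linarith)
  refine le_antisymm (iSup₂_le fun h hh => ENNReal.ofReal_le_ofReal ?_) ?_
  · have hch : |c * h| ≤ t := by
      rw [abs_mul, abs_of_pos hc, ← le_div_iff₀' hc]
      exact hh
    rw [phiAlpha_eq_two_rpow_mul_abs_sin_half]
    gcongr
    exact abs_sin_half_le_sin_half ht hch
  · refine le_iSup₂_of_le (t / c) (by rw [abs_of_nonneg (by positivity)]) (le_of_eq ?_)
    rw [mul_div_cancel₀ t hc.ne', phiAlpha_eq_two_rpow_mul_abs_sin_half, abs_of_nonneg hsin]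

lemma tsum_tail_eq_of_support {A : ℤ → ℂ} {n : ℕ} (hn : 1 ≤ n)
    (hsupp : ∀ k : ℤ, k ≠ -(n : ℤ) → k ≠ 0 → k ≠ (n : ℤ) → A k = 0) (γ : ℤ → ℝ) :
    (∑' k : ℤ, if (n : ℤ) ≤ |k| then ENNReal.ofReal (γ k * ‖A k‖) else 0)
      = ENNReal.ofReal (γ (-n) * ‖A (-n)‖) + ENNReal.ofReal (γ n * ‖A n‖) := by
  rw [tsum_eq_sum (s := {-(n : ℤ), (n : ℤ)}) fun k hk => ?_, sum_pair (by omega),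
    if_pos (by simp), if_pos (by simp)]
  simp only [mem_insert, mem_singleton, not_or] at hk
  split_ifs with hk_tail
  · rw [hsupp k hk.1 (by rintro rfl; simp at hk_tail; omega) hk.2, norm_zero, mul_zero,
      ENNReal.ofReal_zero]
  · rfl

lemma tsum_mod_eq_of_support {Λ : ℤ → ℝ} {φ : ℝ → ℝ} {A : ℤ → ℂ} {n : ℕ} (hn : 1 ≤ n)
    (hsupp : ∀ k : ℤ, k ≠ -(n : ℤ) → k ≠ 0 → k ≠ (n : ℤ) → A k = 0)
    (hΛ₀ : Λ 0 = 0) (hΛneg : Λ (-n) = -Λ n)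
    (hφ₀ : φ 0 = 0) (hφneg : ∀ t, φ (-t) = φ t) (hφnonneg : ∀ t, 0 ≤ φ t) (γ : ℤ → ℝ) (h : ℝ) :
    (∑' k : ℤ, ENNReal.ofReal (γ k * φ (Λ k * h) * ‖A k‖))
      = ENNReal.ofReal (φ (Λ n * h)) *
          ∑' k : ℤ, if (n : ℤ) ≤ |k| then ENNReal.ofReal (γ k * ‖A k‖) else 0 := by
  rw [tsum_tail_eq_of_support hn hsupp, tsum_eq_sum (s := {-(n : ℤ), (n : ℤ)}) fun k hk => ?_,
    sum_pair (by omega), hΛneg, neg_mul, hφneg, mul_add,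
    ← ENNReal.ofReal_mul (hφnonneg _), ← ENNReal.ofReal_mul (hφnonneg _)]
  · ring_nf
  simp only [mem_insert, mem_singleton, not_or] at hk
  by_cases hk₀ : k = 0
  · rw [hk₀, hΛ₀, zero_mul, hφ₀, mul_zero, zero_mul, ENNReal.ofReal_zero]
  · rw [hsupp k hk.1 hk₀ hk.2, norm_zero, mul_zero, ENNReal.ofReal_zero]

lemma genMod_eq_iSup_mul_bestE_of_support {Λ : ℤ → ℝ} {M : ℤ → ℝ → ℝ} {φ : ℝ → ℝ}
    {A : ℤ → ℂ} {n : ℕ} (hn : 1 ≤ n)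
    (hsupp : ∀ k : ℤ, k ≠ -(n : ℤ) → k ≠ 0 → k ≠ (n : ℤ) → A k = 0)
    (hΛ₀ : Λ 0 = 0) (hΛneg : Λ (-n) = -Λ n)
    (hφ₀ : φ 0 = 0) (hφneg : ∀ t, φ (-t) = φ t) (hφnonneg : ∀ t, 0 ≤ φ t) (δ : ℝ) :
    genMod Λ M A φ δ
      = (⨆ (h : ℝ) (_ : |h| ≤ δ), ENNReal.ofReal (φ (Λ n * h))) * bestE M A n := by
  simp only [genMod, bestE, ENNReal.iSup_mul, ENNReal.mul_iSup,
    tsum_mod_eq_of_support hn hsupp hΛ₀ hΛneg hφ₀ hφneg hφnonneg]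
  exact iSup₂_comm _

lemma integral_sin_half_rpow_pos {α τ : ℝ} (hα : 0 ≤ α) (hτ₀ : 0 < τ) (hτ : τ ≤ 2 * π) :
    0 < ∫ t in (0 : ℝ)..τ, sin (t / 2) ^ α := by
  refine intervalIntegral_pos_of_pos_on ?_ (fun t ht => rpow_pos_of_pos ?_ α) hτ₀
  · exact ((continuous_sin.comp (continuous_id.div_const 2)).continuousOn.rpow_const
      fun _ _ => Or.inr hα).intervalIntegrable
  · exact sin_pos_of_pos_of_lt_pi (by linarith [ht.1]) (by linarith [ht.2])

theorem jackson_unit_weight_sharp_general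
    (Λ : ℤ → ℝ) (M : ℤ → ℝ → ℝ) (A : ℤ → ℂ)
    (hΛ : IsExponents Λ)
    (n : ℕ) (hn : 1 ≤ n)
    (hsupp : ∀ k : ℤ, k ≠ -(n : ℤ) → k ≠ 0 → k ≠ (n : ℤ) → A k = 0)
    (α : ℝ) (hα : 1 ≤ α) (τ : ℝ) (hτ0 : 0 < τ) (hτ : τ ≤ 3 * π / 4) :
    (bestE M A n).toReal
      = (1 / (2 ^ α * ∫ t in (0 : ℝ)..τ, Real.sin (t / 2) ^ α)) *
          ∫ t in (0 : ℝ)..τ, (genMod Λ M A (phiAlpha α) (t / Λ n)).toReal := by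
  obtain ⟨hΛ₀, hΛneg, hΛpos, -⟩ := hΛ
  have hΛn : 0 < Λ n := hΛpos n (by exact_mod_cast hn)
  have hmod : ∀ t ∈ Set.uIcc 0 τ, (genMod Λ M A (phiAlpha α) (t / Λ n)).toReal
      = 2 ^ α * sin (t / 2) ^ α * (bestE M A n).toReal := by
    intro t ht
    rw [Set.uIcc_of_le hτ0.le] at ht
    have hsin : 0 ≤ sin (t / 2) :=
      sin_nonneg_of_nonneg_of_le_pi (by linarith [ht.1]) (by linarith [ht.2, pi_pos])
    rw [genMod_eq_iSup_mul_bestE_of_support hn hsupp hΛ₀ (hΛneg n) (phiAlpha_zero (by linarith))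
      (phiAlpha_neg α) (phiAlpha_nonneg α), iSup_ofReal_phiAlpha_mul (by linarith) hΛn ht.1
      (by linarith [ht.2, pi_pos]), ENNReal.toReal_mul, ENNReal.toReal_ofReal (by positivity)]
  have hI := integral_sin_half_rpow_pos (α := α) (by linarith) hτ0 (by linarith [pi_pos])
  rw [integral_congr hmod, intervalIntegral.integral_mul_const, intervalIntegral.integral_const_mul]
  field_simp

/-- **Sharpness of Corollary 3.** If `A` is supported on `{-n, 0, n}`, then for every
`α ≥ 1` and `0 < τ ≤ 3π/4` the exact equality
`E_n(A) = (1/(2^α ∫_0^τ sin^α(t/2) dt)) · ∫_0^τ ω_α(A, t/λ_n) dt` holds. -/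
theorem jackson_unit_weight_sharp
    (Λ : ℤ → ℝ) (M : ℤ → ℝ → ℝ) (A : ℤ → ℂ)
    (hΛ : IsExponents Λ) (hM : ∀ k, IsOrlicz (M k)) (hA : orliczNorm M A ≠ ⊤)
    (n : ℕ) (hn : 1 ≤ n)
    (hsupp : ∀ k : ℤ, k ≠ -(n : ℤ) → k ≠ 0 → k ≠ (n : ℤ) → A k = 0)
    (α : ℝ) (hα : 1 ≤ α) (τ : ℝ) (hτ0 : 0 < τ) (hτ : τ ≤ 3 * π / 4) :
    (bestE M A n).toReal
      = (1 / (2 ^ α * ∫ t in (0 : ℝ)..τ, Real.sin (t / 2) ^ α)) *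
          ∫ t in (0 : ℝ)..τ, (genMod Λ M A (phiAlpha α) (t / Λ n)).toReal :=
  jackson_unit_weight_sharp_general Λ M A hΛ n hn hsupp α hα τ hτ0 hτ

end
end

section
/- (Sharpness of the constant π^α in the improved inverse theorem.) Assume λ_n → ∞ as n → ∞. Let α > 0, let k_0 ∈ ℕ, and let A : ℤ → ℂ be given by A_{k_0} = 1 and A_k = 0 for k ≠ k_0 (the coefficients of the function e^{iλ_{k_0}x}); assume c := sup{γ_{k_0} : γ ∈ Γ} satisfies 0 < c < ∞. Then for every ε with 0 < ε < π^α there exists n_0 ∈ ℕ such that for all n > n_0: ω_α(A, π/λ_n) > ((π^α − ε)/λ_n^α) · Σ_{ν=1}^{n} (λ_ν^α − λ_{ν−1}^α) E_ν(A), where λ_0 = 0. -/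
open MeasureTheory Real Filter Finset intervalIntegral
open scoped ENNReal Topology

noncomputable section

/-! For the single exponential, `E_ν(A) ≤ c` and `E_ν(A) = 0` once `ν > k₀`, so the weighted
sum telescopes to at most `λ_{k₀}^α c` and the left side is at most
`(π^α - ε) c (λ_{k₀}/λ_n)^α`. On the other side `ω_α(A, π/λ_n) ≥ γ_{k₀} φ_α(t_n)` for every
`γ ∈ Γ`, where `t_n = π λ_{k₀}/λ_n → 0`, and `φ_α(t) = |sinc (t/2)|^α |t|^α`, so this is
`γ_{k₀} π^α (λ_{k₀}/λ_n)^α (1 + o(1))`. Taking `γ_{k₀}` close enough to `c` wins for large `n`. -/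

lemma phiAlpha_eq_abs_sinc_mul (α t : ℝ) :
    phiAlpha α t = |sinc (t / 2)| ^ α * |t| ^ α := by
  have h_one_sub_cos : 2 * (1 - cos t) = (2 * sin (t / 2)) ^ 2 := by
    have := sin_sq_eq_half_sub (t / 2)
    rw [show 2 * (t / 2) = t by ring] at this
    linear_combination (-4 : ℝ) * this
  have h_sinc : 2 * sin (t / 2) = sinc (t / 2) * t := by
    rcases eq_or_ne t 0 with rfl | ht
    · simp
    · rw [sinc_of_ne_zero (by positivity)]
      field_simp
  rw [phiAlpha, ← mul_rpow (by norm_num) (by linarith [cos_le_one t]), h_one_sub_cos,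
    ← sq_abs, ← rpow_natCast, ← rpow_mul (abs_nonneg _),
    show ((2 : ℕ) : ℝ) * (α / 2) = α by push_cast; ring, h_sinc, abs_mul,
    mul_rpow (abs_nonneg _) (abs_nonneg _)]

namespace IsExponents

variable {Λ : ℤ → ℝ}

lemma nonneg (hΛ : IsExponents Λ) {k : ℤ} (hk : 0 ≤ k) : 0 ≤ Λ k := by
  rcases hk.eq_or_lt with rfl | hk
  · exact hΛ.1.ge
  · exact (hΛ.2.2.1 k hk).le

lemma le_add_one (hΛ : IsExponents Λ) {k : ℤ} (hk : 0 ≤ k) : Λ k ≤ Λ (k + 1) := by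
  rcases hk.eq_or_lt with rfl | hk
  · simpa [hΛ.1] using (hΛ.2.2.1 1 le_rfl).le
  · exact (hΛ.2.2.2 k hk).le

lemma sum_Icc_rpow_sub (hΛ : IsExponents Λ) {α : ℝ} (hα : α ≠ 0) (n : ℕ) :
    ∑ ν ∈ Icc 1 n, (Λ ν ^ α - Λ ((ν : ℤ) - 1) ^ α) = Λ n ^ α := by
  induction n with
  | zero => simp [hΛ.1, zero_rpow hα]
  | succ n ih =>
    rw [sum_Icc_succ_top (by omega), ih]
    push_cast
    ring_nf

end IsExponents

section SingleCoefficient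

variable {M : ℤ → ℝ → ℝ} {A : ℤ → ℂ} {k₀ : ℤ}

lemma bestE_le_of_single (hA : ∀ k, A k = if k = k₀ then 1 else 0) {c : ℝ}
    (hc : ∀ γ ∈ GammaSet M, γ k₀ ≤ c) (n : ℕ) : bestE M A n ≤ ENNReal.ofReal c := by
  refine iSup₂_le fun γ hγ => ?_
  rw [tsum_eq_single k₀ fun k hk => by simp [hA k, hk]]
  split_ifs
  · simpa [hA] using ENNReal.ofReal_le_ofReal (hc γ hγ)
  · exact zero_le

lemma bestE_eq_zero_of_single (hA : ∀ k, A k = if k = k₀ then 1 else 0) {n : ℕ}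
    (hn : |k₀| < n) : bestE M A n = 0 := by
  refine le_antisymm (iSup₂_le fun γ _ => ?_) zero_le
  rw [tsum_eq_single k₀ fun k hk => by simp [hA k, hk], if_neg (not_le.2 hn)]

end SingleCoefficient

lemma ofReal_le_genMod (Λ : ℤ → ℝ) (M : ℤ → ℝ → ℝ) (A : ℤ → ℂ) (φ : ℝ → ℝ) {δ h : ℝ}
    (hh : |h| ≤ δ) {γ : ℤ → ℝ} (hγ : γ ∈ GammaSet M) (k : ℤ) :
    ENNReal.ofReal (γ k * φ (Λ k * h) * ‖A k‖) ≤ genMod Λ M A φ δ :=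
  le_iSup₂_of_le h hh (le_iSup₂_of_le γ hγ (ENNReal.le_tsum k))

lemma sum_Icc_mul_bestE_le_of_single {Λ : ℤ → ℝ} {M : ℤ → ℝ → ℝ} {A : ℤ → ℂ} {α c : ℝ}
    {k₀ : ℕ} (hΛ : IsExponents Λ) (hα : 0 < α) (hA : ∀ k, A k = if k = (k₀ : ℤ) then 1 else 0)
    (hc : ∀ γ ∈ GammaSet M, γ k₀ ≤ c) (n : ℕ) :
    ∑ ν ∈ Icc 1 n, ENNReal.ofReal (Λ ν ^ α - Λ ((ν : ℤ) - 1) ^ α) * bestE M A ν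
      ≤ ENNReal.ofReal (Λ k₀ ^ α * c) := by
  have h_incr : ∀ ν ∈ Icc 1 k₀, 0 ≤ Λ ν ^ α - Λ ((ν : ℤ) - 1) ^ α := fun ν hν => by
    have hν : (0 : ℤ) ≤ ν - 1 := by have := (mem_Icc.1 hν).1; omega
    have := hΛ.le_add_one hν
    rw [sub_add_cancel] at this
    exact sub_nonneg.2 (rpow_le_rpow (hΛ.nonneg hν) this hα.le)
  calc _ ≤ ∑ ν ∈ Icc 1 k₀, ENNReal.ofReal (Λ ν ^ α - Λ ((ν : ℤ) - 1) ^ α) * bestE M A ν :=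
        sum_le_sum_of_ne_zero fun ν hν hne => mem_Icc.2 ⟨(mem_Icc.1 hν).1, not_lt.1 fun hlt =>
          hne (by rw [bestE_eq_zero_of_single hA (by simpa using hlt), mul_zero])⟩
    _ ≤ ∑ ν ∈ Icc 1 k₀, ENNReal.ofReal (Λ ν ^ α - Λ ((ν : ℤ) - 1) ^ α) * ENNReal.ofReal c := by
        gcongr
        exact bestE_le_of_single hA hc _
    _ = ENNReal.ofReal (Λ k₀ ^ α * c) := by
        rw [← sum_mul, ← ENNReal.ofReal_sum_of_nonneg h_incr, hΛ.sum_Icc_rpow_sub hα.ne',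
          ENNReal.ofReal_mul (rpow_nonneg (hΛ.nonneg (by positivity)) _)]

lemma ofReal_div_mul_sum_bestE_lt_genMod_of_single {Λ : ℤ → ℝ} {M : ℤ → ℝ → ℝ} {A : ℤ → ℂ}
    {α a c : ℝ} {k₀ n : ℕ} {γ₀ : ℤ → ℝ} (hΛ : IsExponents Λ) (hα : 0 < α)
    (hA : ∀ k, A k = if k = (k₀ : ℤ) then 1 else 0) (hc : ∀ γ ∈ GammaSet M, γ k₀ ≤ c)
    (hγ₀ : γ₀ ∈ GammaSet M) (hk₀ : 0 < Λ k₀) (hn : 0 < Λ n) (ha : 0 ≤ a) (hc₀ : 0 ≤ c)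
    (h_sinc : a * c < π ^ α * (γ₀ k₀ * |sinc (Λ k₀ * (π / Λ n) / 2)| ^ α)) :
    ENNReal.ofReal (a / Λ n ^ α) *
        ∑ ν ∈ Icc 1 n, ENNReal.ofReal (Λ ν ^ α - Λ ((ν : ℤ) - 1) ^ α) * bestE M A ν
      < genMod Λ M A (phiAlpha α) (π / Λ n) := by
  set t := Λ k₀ * (π / Λ n)
  have h_abs_t : |t| ^ α = Λ k₀ ^ α * π ^ α / Λ n ^ α := by
    rw [abs_of_pos (by positivity), mul_rpow hk₀.le (by positivity), div_rpow pi_pos.le hn.le]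
    ring
  calc _ ≤ ENNReal.ofReal (a / Λ n ^ α) * ENNReal.ofReal (Λ k₀ ^ α * c) := by
        gcongr
        exact sum_Icc_mul_bestE_le_of_single hΛ hα hA hc n
    _ = ENNReal.ofReal (a / Λ n ^ α * (Λ k₀ ^ α * c)) := (ENNReal.ofReal_mul (by positivity)).symm
    _ < ENNReal.ofReal (γ₀ k₀ * phiAlpha α t) := by
        rw [ENNReal.ofReal_lt_ofReal_iff_of_nonneg (by positivity), phiAlpha_eq_abs_sinc_mul,
          h_abs_t]
        calc a / Λ n ^ α * (Λ k₀ ^ α * c) = a * c * (Λ k₀ ^ α / Λ n ^ α) := by ring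
          _ < π ^ α * (γ₀ k₀ * |sinc (t / 2)| ^ α) * (Λ k₀ ^ α / Λ n ^ α) := by gcongr
          _ = _ := by ring
    _ ≤ genMod Λ M A (phiAlpha α) (π / Λ n) := by
        simpa [hA] using ofReal_le_genMod Λ M A (phiAlpha α)
          (abs_of_pos (by positivity)).le hγ₀ k₀

theorem inverse_theorem_constant_sharp_general
    (Λ : ℤ → ℝ) (M : ℤ → ℝ → ℝ)
    (hΛ : IsExponents Λ)
    (hΛtop : Filter.Tendsto (fun n : ℕ => Λ n) Filter.atTop Filter.atTop)
    (α : ℝ) (hα : 0 < α) (k₀ : ℕ) (hk₀ : 1 ≤ k₀)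
    (A : ℤ → ℂ) (hAdef : ∀ k : ℤ, A k = if k = (k₀ : ℤ) then 1 else 0)
    (hbdd : BddAbove {x : ℝ | ∃ γ ∈ GammaSet M, x = γ (k₀ : ℤ)})
    (hpos : 0 < sSup {x : ℝ | ∃ γ ∈ GammaSet M, x = γ (k₀ : ℤ)}) :
    ∀ ε : ℝ, 0 < ε → ε < π ^ α →
      ∃ n₀ : ℕ, ∀ n : ℕ, n₀ < n →
        ENNReal.ofReal ((π ^ α - ε) / Λ n ^ α) *
            ∑ ν ∈ Finset.Icc 1 n,
              ENNReal.ofReal (Λ ν ^ α - Λ ((ν : ℤ) - 1) ^ α) * bestE M A ν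
          < genMod Λ M A (phiAlpha α) (π / Λ n) := by
  intro ε hε hεπ
  set c := sSup {x : ℝ | ∃ γ ∈ GammaSet M, x = γ (k₀ : ℤ)}
  have hπα : 0 < π ^ α := rpow_pos_of_pos pi_pos α
  obtain ⟨_, ⟨γ₀, hγ₀, rfl⟩, hγ₀_gt⟩ := exists_lt_of_lt_csSup
    (Set.nonempty_iff_ne_empty.2 fun h => by simp [c, h] at hpos)
    (show (π ^ α - ε) * c / π ^ α < c by rw [div_lt_iff₀ hπα]; nlinarith)
  have h_lim : Tendsto (fun n : ℕ => π ^ α * (γ₀ k₀ * |sinc (Λ k₀ * (π / Λ n) / 2)| ^ α))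
      atTop (𝓝 (π ^ α * γ₀ k₀)) := by
    have h_cont : Continuous fun s : ℝ => π ^ α * (γ₀ k₀ * |sinc (Λ k₀ * s / 2)| ^ α) := by
      fun_prop (disch := positivity)
    simpa [Function.comp_def] using (h_cont.tendsto 0).comp (tendsto_const_nhds.div_atTop hΛtop)
  obtain ⟨n₀, hn₀⟩ := eventually_atTop.1 ((h_lim.eventually (lt_mem_nhds
    (by rwa [div_lt_iff₀' hπα] at hγ₀_gt))).and (eventually_gt_atTop k₀))
  refine ⟨n₀, fun n hn => ?_⟩
  obtain ⟨h_sinc, hk₀n⟩ := hn₀ n hn.le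
  exact ofReal_div_mul_sum_bestE_lt_genMod_of_single hΛ hα hAdef
    (fun γ hγ => le_csSup hbdd ⟨γ, hγ, rfl⟩) hγ₀ (hΛ.2.2.1 k₀ (by exact_mod_cast hk₀))
    (hΛ.2.2.1 n (by omega)) (by linarith) hpos.le h_sinc

/-- **Sharpness of the constant `π^α` in the improved inverse theorem.** For the
coefficient sequence of `e^{iλ_{k₀}x}`, for every `0 < ε < π^α` there exists `n₀`
such that for all `n > n₀`:
`ω_α(A, π/λ_n) > ((π^α - ε)/λ_n^α) Σ_{ν=1}^n (λ_ν^α - λ_{ν-1}^α) E_ν(A)`. -/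
theorem inverse_theorem_constant_sharp
    (Λ : ℤ → ℝ) (M : ℤ → ℝ → ℝ)
    (hΛ : IsExponents Λ) (hM : ∀ k, IsOrlicz (M k))
    (hΛtop : Filter.Tendsto (fun n : ℕ => Λ n) Filter.atTop Filter.atTop)
    (α : ℝ) (hα : 0 < α) (k₀ : ℕ) (hk₀ : 1 ≤ k₀)
    (A : ℤ → ℂ) (hAdef : ∀ k : ℤ, A k = if k = (k₀ : ℤ) then 1 else 0)
    (hbdd : BddAbove {x : ℝ | ∃ γ ∈ GammaSet M, x = γ (k₀ : ℤ)})
    (hpos : 0 < sSup {x : ℝ | ∃ γ ∈ GammaSet M, x = γ (k₀ : ℤ)}) :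
    ∀ ε : ℝ, 0 < ε → ε < π ^ α →
      ∃ n₀ : ℕ, ∀ n : ℕ, n₀ < n →
        ENNReal.ofReal ((π ^ α - ε) / Λ n ^ α) *
            ∑ ν ∈ Finset.Icc 1 n,
              ENNReal.ofReal (Λ ν ^ α - Λ ((ν : ℤ) - 1) ^ α) * bestE M A ν
          < genMod Λ M A (phiAlpha α) (π / Λ n) :=
  inverse_theorem_constant_sharp_general Λ M hΛ hΛtop α hα k₀ hk₀ A hAdef hbdd hpos

end
end
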